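/- arXiv:2002.08874 — 2 statements merged into one kernel-verified Lean document; each statement's English description precedes it below -/
import Mathlib

section
/- Let K be a field and f : RatFunc K. The image of f under the canonical embedding of RatFunc K into the field of formal Laurent series LaurentSeries K lies in the range of the canonical ring embedding of formal power series PowerSeries K into LaurentSeries K if and only if (RatFunc.denom f).eval 0 ≠ 0. (In the paper's words: the fractions of polynomials expressible as formal power series are precisely the rational fractions, i.e., those with nonzero constant coefficient in the denominator.) -/
/-!
Write `f = num / denom` with coprime polynomials. Inside the Laurent series, `f` is a power series
exactly when `denom ∣ num` in `K⟦X⟧`. If `denom(0) ≠ 0` then `denom` is a unit of `K⟦X⟧`; if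
`denom(0) = 0` then `X ∣ denom`, so `X ∣ num` as well, contradicting coprimality.
-/

open PowerSeries LaurentSeries
open scoped Polynomial

theorem HahnSeries.ofPowerSeries_div_mem_range_iff {K : Type*} [Field K] {a b : K⟦X⟧}
    (hb : b ≠ 0) :
    ofPowerSeries ℤ K a / ofPowerSeries ℤ K b ∈ Set.range (ofPowerSeries ℤ K) ↔ b ∣ a := by
  have hinj := ofPowerSeries_injective (Γ := ℤ) (R := K)
  have hb' : ofPowerSeries ℤ K b ≠ 0 := (map_ne_zero_iff _ hinj).mpr hb
  constructor
  · rintro ⟨g, hg⟩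
    refine ⟨g, hinj ?_⟩
    rw [map_mul, hg, mul_div_cancel₀ _ hb']
  · rintro ⟨g, rfl⟩
    exact ⟨g, by rw [map_mul, mul_div_cancel_left₀ _ hb']⟩

theorem RatFunc.coe_eq_num_div_denom {K : Type*} [Field K] (f : RatFunc K) :
    (f : K⸨X⸩) = ((f.num : K⟦X⟧) : K⸨X⸩) / ((f.denom : K⟦X⟧) : K⸨X⸩) := by
  conv_lhs => rw [← RatFunc.num_div_denom f]
  rw [RatFunc.coe_coe, RatFunc.coe_coe, map_div₀]
  rfl

theorem Polynomial.coe_dvd_coe_iff_eval_zero_ne_zero {K : Type*} [Field K] {p q : K[X]}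
    (hpq : IsCoprime p q) : (q : K⟦X⟧) ∣ (p : K⟦X⟧) ↔ q.eval 0 ≠ 0 := by
  simp only [← coeff_zero_eq_eval_zero, ← Polynomial.constantCoeff_coe]
  constructor
  · intro hdvd hq
    have hp : PowerSeries.constantCoeff (p : K⟦X⟧) = 0 := by
      simpa [hq] using _root_.map_dvd (PowerSeries.constantCoeff (R := K)) hdvd
    rw [Polynomial.constantCoeff_coe, ← Polynomial.X_dvd_iff] at hp hq
    exact not_isUnit_X (hpq.isUnit_of_dvd' hp hq)
  · intro hq
    exact (isUnit_iff_constantCoeff.mpr hq.isUnit).dvd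

/-- A fraction of polynomials embeds as a formal power series inside the field of
formal Laurent series iff the constant coefficient of its denominator is nonzero. -/
theorem ratFunc_mem_powerSeries_range_iff (K : Type*) [Field K] (f : RatFunc K) :
    (f : LaurentSeries K) ∈ Set.range (HahnSeries.ofPowerSeries ℤ K) ↔
      (RatFunc.denom f).eval 0 ≠ 0 := by
  have hdenom : (f.denom : K⟦X⟧) ≠ 0 := Polynomial.coe_eq_zero_iff.not.mpr f.denom_ne_zero
  rw [RatFunc.coe_eq_num_div_denom, HahnSeries.ofPowerSeries_div_mem_range_iff hdenom,
    Polynomial.coe_dvd_coe_iff_eval_zero_ne_zero f.isCoprime_num_denom]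
end

section
/- Let K be a field, let A be an m × n matrix with entries in RatFunc K, and let b : Fin m → RatFunc K. Consider the affine map f : (Fin n → RatFunc K) → (Fin m → RatFunc K) given by f(p) = A.mulVec p + b. Then all entries of A and of b are rational (i.e., have denominators with nonzero constant coefficient) if and only if for every vector r : Fin n → RatFunc K all of whose entries are rational, all entries of f(r) are rational. (This is the paper's Proposition 9: an affine map f : F(x)ⁿ → F(x)ᵐ is rational iff f(r) ∈ ratioᵐ for all r ∈ ratioⁿ.) -/
def IsRationalFraction {K : Type*} [Field K] (f : RatFunc K) : Prop :=
  (RatFunc.denom f).eval 0 ≠ 0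

section AffineMap

variable {m n R : Type*} [Fintype n] [DecidableEq n] [Ring R]

/-- The translation part is the image of `0`, and column `j` of the linear part is the image
of the basis vector `Pi.single j 1` minus the translation part. -/
theorem Matrix.forall_mem_and_forall_mem_iff_mulVec_add_mem (S : Subring R)
    (A : Matrix m n R) (b : m → R) :
    ((∀ i j, A i j ∈ S) ∧ ∀ i, b i ∈ S) ↔
      ∀ r : n → R, (∀ j, r j ∈ S) → ∀ i, (A.mulVec r + b) i ∈ S := by
  constructor
  · rintro ⟨hA, hb⟩ r hr i
    exact S.add_mem (S.sum_mem fun j _ => S.mul_mem (hA i j) (hr j)) (hb i)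
  · intro h
    have hb : ∀ i, b i ∈ S := by
      simpa using h 0 fun _ => S.zero_mem
    refine ⟨fun i j => ?_, hb⟩
    have hsingle : ∀ k, (Pi.single j 1 : n → R) k ∈ S := fun k => by
      by_cases hk : k = j <;> simp [hk]
    have hcol : (A.mulVec (Pi.single j 1) + b) i - b i = A i j := by
      simp [Matrix.mulVec_single]
    exact hcol ▸ S.sub_mem (h _ hsingle i) (hb i)

end AffineMap

namespace IsRationalFraction

variable {K : Type*} [Field K]

theorem of_denom_dvd {x : RatFunc K} {q : Polynomial K} (hx : RatFunc.denom x ∣ q)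
    (hq : q.eval 0 ≠ 0) : IsRationalFraction x := by
  obtain ⟨c, rfl⟩ := hx
  rw [Polynomial.eval_mul] at hq
  exact left_ne_zero_of_mul hq

theorem algebraMap (p : Polynomial K) : IsRationalFraction (algebraMap _ (RatFunc K) p) := by
  simp [IsRationalFraction, RatFunc.denom_algebraMap]

theorem add {x y : RatFunc K} (hx : IsRationalFraction x) (hy : IsRationalFraction y) :
    IsRationalFraction (x + y) :=
  of_denom_dvd (RatFunc.denom_add_dvd x y) (by rw [Polynomial.eval_mul]; exact mul_ne_zero hx hy)

theorem mul {x y : RatFunc K} (hx : IsRationalFraction x) (hy : IsRationalFraction y) :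
    IsRationalFraction (x * y) :=
  of_denom_dvd (RatFunc.denom_mul_dvd x y) (by rw [Polynomial.eval_mul]; exact mul_ne_zero hx hy)

theorem neg {x : RatFunc K} (hx : IsRationalFraction x) : IsRationalFraction (-x) := by
  simpa using (algebraMap (-1)).mul hx

end IsRationalFraction

variable (K : Type*) [Field K] in
/-- The ring `ratio`: the local ring of `K[X]` at the prime `(X)`, seen inside `RatFunc K`. -/
def RatFunc.ratio : Subring (RatFunc K) where
  carrier := {f | IsRationalFraction f}
  zero_mem' := by simpa using IsRationalFraction.algebraMap (0 : Polynomial K)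
  one_mem' := by simpa using IsRationalFraction.algebraMap (1 : Polynomial K)
  add_mem' := IsRationalFraction.add
  mul_mem' := IsRationalFraction.mul
  neg_mem' := IsRationalFraction.neg

/-- An affine map `p ↦ A.mulVec p + b` over `RatFunc K` has all entries of `A` and
`b` rational iff it maps every vector with rational entries to a vector with
rational entries. -/
theorem affineMap_rational_iff (K : Type*) [Field K] (m n : ℕ)
    (A : Matrix (Fin m) (Fin n) (RatFunc K)) (b : Fin m → RatFunc K) :
    ((∀ i j, IsRationalFraction (A i j)) ∧ ∀ i, IsRationalFraction (b i)) ↔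
      ∀ r : Fin n → RatFunc K, (∀ j, IsRationalFraction (r j)) →
        ∀ i, IsRationalFraction ((A.mulVec r + b) i) :=
  Matrix.forall_mem_and_forall_mem_iff_mulVec_add_mem (RatFunc.ratio K) A b
end
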